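/- Let X¹,...,X^N be i.i.d. samples from a discrete graphical model that factors according to a junction tree with cliques 𝒞 and separators 𝒮, and let n be the vector of clique and separator counts. Then for cliques/separators A and B separated by separator S in the junction tree, n_A and n_B are conditionally independent given n_S. -/

import Mathlib

/-!
Cut the junction tree at the edge `{i₀, j₀}`: the cliques on the side of `a` cover a vertex set
`U`, the remaining ones a set `W`, and by the running intersection property `U ∩ W` is the
separator `S`. So the mass of one individual factors as `f(x_U) g(x_W)`, and given the separator
columns `z` of the sample, the `U`-columns and the `W`-columns are independent. The conditional
mass of an event on the `W`-columns is invariant under permuting the individuals, hence constant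
on the set of `z` with a given count vector `n_S`; summing over these `z` gives
`P(n_A, n_B, n_S) P(n_S) = P(n_A, n_S) P(n_B, n_S)`.
-/

open MeasureTheory ProbabilityTheory

open Classical in
/-- The count vector of a set `A` of vertices: `cgmCount X A ω i_A` is the number of
individuals `m` whose configuration restricted to `A` equals `i_A`. -/
noncomputable def cgmCount {Ω V 𝒳 : Type*} {N : ℕ} (X : Fin N → Ω → V → 𝒳)
    (A : Finset V) (ω : Ω) (iA : A → 𝒳) : ℕ :=
  (Finset.univ.filter fun m : Fin N =>
    ∀ v : A, X m ω v = iA v).card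

open Finset

section Counts

open Classical

variable {κ β : Type*} [Fintype κ]

noncomputable def countVec (s : κ → β) (b : β) : ℕ := #{m | s m = b}

lemma countVec_comp_perm (s : κ → β) (σ : Equiv.Perm κ) : countVec (s ∘ σ) = countVec s := by
  funext b
  exact card_equiv σ (by simp)

lemma exists_perm_comp_eq_of_countVec_eq {s s' : κ → β} (h : countVec s = countVec s') :
    ∃ σ : Equiv.Perm κ, s ∘ σ = s' := by
  have e : ∀ b, {m // s' m = b} ≃ {m // s m = b} := fun b =>
    Fintype.equivOfCardEq (by simpa [Fintype.card_subtype, countVec] using (congrFun h b).symm)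
  exact ⟨Equiv.ofFiberEquiv e, funext (Equiv.ofFiberEquiv_map e)⟩

lemma apply_eq_of_countVec_eq {R : Type*} {H : (κ → β) → R}
    (hH : ∀ (σ : Equiv.Perm κ) s, H (s ∘ σ) = H s) {s s' : κ → β}
    (h : countVec s = countVec s') : H s = H s' := by
  obtain ⟨σ, rfl⟩ := exists_perm_comp_eq_of_countVec_eq h
  exact (hH σ s).symm

end Counts

section Columns

open Classical

variable {κ V 𝒳 : Type*} {S U W : Finset V}

def restrictCols (U : Finset V) (y : κ → V → 𝒳) : κ → U → 𝒳 := fun m v => y m v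

def restrictCols₂ (h : S ⊆ U) (u : κ → U → 𝒳) : κ → S → 𝒳 := fun m v => u m ⟨v, h v.2⟩

@[simp]
lemma restrictCols₂_restrictCols (h : S ⊆ U) (y : κ → V → 𝒳) :
    restrictCols₂ h (restrictCols U y) = restrictCols S y := rfl

lemma restrictCols₂_comp (h : S ⊆ U) (u : κ → U → 𝒳) (σ : Equiv.Perm κ) :
    restrictCols₂ h (u ∘ σ) = restrictCols₂ h u ∘ σ := rfl

noncomputable def glueCols [Fintype V] (hUW : U ∪ W = univ) (u : κ → U → 𝒳)
    (w : κ → W → 𝒳) : κ → V → 𝒳 := fun m v =>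
  if h : v ∈ U then u m ⟨v, h⟩ else w m ⟨v, (mem_union.1 (hUW ▸ mem_univ v)).resolve_left h⟩

variable [Fintype V]

lemma restrictCols_glueCols_left (hUW : U ∪ W = univ) (u : κ → U → 𝒳) (w : κ → W → 𝒳) :
    restrictCols U (glueCols hUW u w) = u := by
  funext m v
  simp [restrictCols, glueCols, v.2]

lemma restrictCols_glueCols_right (hUW : U ∪ W = univ) {u : κ → U → 𝒳} {w : κ → W → 𝒳}
    (h : restrictCols₂ inter_subset_left u = restrictCols₂ inter_subset_right w) :
    restrictCols W (glueCols hUW u w) = w := by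
  funext m v
  by_cases hv : (v : V) ∈ U
  · simpa [restrictCols, restrictCols₂, glueCols, hv] using
      congrFun (congrFun h m) ⟨v, mem_inter.2 ⟨hv, v.2⟩⟩
  · simp [restrictCols, glueCols, hv]

lemma glueCols_restrictCols (hUW : U ∪ W = univ) (y : κ → V → 𝒳) :
    glueCols hUW (restrictCols U y) (restrictCols W y) = y := by
  funext m v
  by_cases hv : v ∈ U <;> simp [restrictCols, glueCols, hv]

lemma cgmCount_eq_countVec_restrictCols {Ω : Type*} {N : ℕ} (X : Fin N → Ω → V → 𝒳)
    (A : Finset V) (ω : Ω) : cgmCount X A ω = countVec (restrictCols A fun m => X m ω) := by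
  funext iA
  unfold cgmCount countVec
  congr 1
  ext m
  simp [restrictCols, funext_iff]

end Columns

section FiberSums

open Classical

variable {κ V 𝒳 R : Type*} [Fintype κ] [Fintype 𝒳] {S U W : Finset V}

noncomputable def fiberSum [AddCommMonoid R] (h : S ⊆ U) (F : (κ → U → 𝒳) → R)
    (z : κ → S → 𝒳) : R :=
  ∑ u with restrictCols₂ h u = z, F u

lemma fiberSum_comp_perm [AddCommMonoid R] (h : S ⊆ U) {F : (κ → U → 𝒳) → R}
    (hF : ∀ (σ : Equiv.Perm κ) u, F (u ∘ σ) = F u) (σ : Equiv.Perm κ) (z : κ → S → 𝒳) :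
    fiberSum h F (z ∘ σ) = fiberSum h F z := by
  refine sum_nbij' (· ∘ σ.symm) (· ∘ σ) ?_ ?_ ?_ ?_ ?_
  · intro u hu
    rw [mem_filter_univ] at hu ⊢
    rw [restrictCols₂_comp, hu, Function.comp_assoc, Equiv.self_comp_symm, Function.comp_id]
  · intro u hu
    rw [mem_filter_univ] at hu ⊢
    rw [restrictCols₂_comp, hu]
  · intro u _
    simp [Function.comp_assoc]
  · intro u _
    simp [Function.comp_assoc]
  · intro u _
    exact (hF σ.symm u).symm

lemma fiberSum_eq_of_countVec_eq [AddCommMonoid R] (h : S ⊆ U) {F : (κ → U → 𝒳) → R}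
    (hF : ∀ (σ : Equiv.Perm κ) u, F (u ∘ σ) = F u) {z z' : κ → S → 𝒳}
    (hz : countVec z = countVec z') : fiberSum h F z = fiberSum h F z' :=
  apply_eq_of_countVec_eq (fiberSum_comp_perm h hF) hz

lemma sum_restrictCols_eq_fiberSum_mul [Fintype V] [CommSemiring R] (hUW : U ∪ W = univ)
    (F : (κ → U → 𝒳) → R) (G : (κ → W → 𝒳) → R) (z : κ → (U ∩ W : Finset V) → 𝒳) :
    ∑ y with restrictCols (U ∩ W) y = z, F (restrictCols U y) * G (restrictCols W y) =
      fiberSum inter_subset_left F z * fiberSum inter_subset_right G z := by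
  rw [fiberSum, fiberSum, sum_mul_sum, ← sum_product']
  refine sum_nbij' (fun y => (restrictCols U y, restrictCols W y))
    (fun p => glueCols hUW p.1 p.2) ?_ ?_ ?_ ?_ ?_
  · intro y hy
    simp only [mem_product, mem_filter, mem_univ, true_and, restrictCols₂_restrictCols] at hy ⊢
    exact ⟨hy, hy⟩
  · rintro ⟨u, w⟩ huw
    simp only [mem_product, mem_filter, mem_univ, true_and] at huw ⊢
    rw [← restrictCols₂_restrictCols inter_subset_left, restrictCols_glueCols_left, huw.1]
  · intro y _
    exact glueCols_restrictCols hUW y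
  · rintro ⟨u, w⟩ huw
    simp only [mem_product, mem_filter, mem_univ, true_and] at huw
    rw [restrictCols_glueCols_left, restrictCols_glueCols_right hUW (huw.1.trans huw.2.symm)]
  · intro y _
    rfl

end FiberSums

lemma sum_mul_mul_sum_mul_comm_of_const {ι R : Type*} [CommSemiring R] (s : Finset ι)
    (a a' b b' : ι → R) (hb : ∀ i ∈ s, ∀ j ∈ s, b i = b j)
    (hb' : ∀ i ∈ s, ∀ j ∈ s, b' i = b' j) :
    (∑ i ∈ s, a i * b i) * ∑ i ∈ s, a' i * b' i =
      (∑ i ∈ s, a i * b' i) * ∑ i ∈ s, a' i * b i := by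
  simp only [sum_mul_sum]
  refine sum_congr rfl fun i hi => sum_congr rfl fun j hj => ?_
  rw [hb i hi j hj, hb' j hj i hi]
  ring

lemma measure_setOf_eq_sum_singleton {α : Type*} [Fintype α] [MeasurableSpace α]
    [MeasurableSingletonClass α] (ν : Measure α) (E : α → Prop) [DecidablePred E] :
    ν {y | E y} = ∑ y with E y, ν {y} := by
  rw [sum_measure_singleton, coe_filter_univ]

section Separation

open Classical

variable {κ V 𝒳 : Type*} [Fintype κ] [Fintype V] [Fintype 𝒳] {U W : Finset V}

lemma sum_countVec_eq_sum_fiberSum_mul {R : Type*} [CommSemiring R] (hUW : U ∪ W = univ)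
    (f : (U → 𝒳) → R) (g : (W → 𝒳) → R) (P : (κ → U → 𝒳) → Prop) (Q : (κ → W → 𝒳) → Prop)
    (fs : ((U ∩ W : Finset V) → 𝒳) → ℕ) :
    ∑ y with (P (restrictCols U y) ∧ Q (restrictCols W y)) ∧
        countVec (restrictCols (U ∩ W) y) = fs,
        ∏ m, f (restrictCols U y m) * g (restrictCols W y m) =
      ∑ z with countVec z = fs,
        fiberSum inter_subset_left (fun u => if P u then ∏ m, f (u m) else 0) z *
          fiberSum inter_subset_right (fun w => if Q w then ∏ m, g (w m) else 0) z := by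
  simp_rw [← sum_restrictCols_eq_fiberSum_mul hUW]
  rw [← sum_fiberwise_of_maps_to (g := restrictCols (U ∩ W)) (t := {z | countVec z = fs})]
  · refine sum_congr rfl fun z hz => ?_
    rw [mem_filter_univ] at hz
    rw [filter_filter, sum_filter, sum_filter]
    refine sum_congr rfl fun y _ => ?_
    by_cases hy : restrictCols (U ∩ W) y = z
    · rw [prod_mul_distrib]
      by_cases hP : P (restrictCols U y) <;> by_cases hQ : Q (restrictCols W y) <;>
        simp [hy, hz, hP, hQ]
    · simp [hy]
  · intro y hy
    rw [mem_filter_univ] at hy ⊢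
    exact hy.2

theorem condIndep_countVec_of_factor [MeasurableSpace 𝒳] [MeasurableSingletonClass 𝒳]
    {S : Finset V} (hUW : U ∪ W = univ) (hS : U ∩ W = S) (ν : Measure (κ → V → 𝒳))
    (f : (U → 𝒳) → ENNReal) (g : (W → 𝒳) → ENNReal)
    (hν : ∀ y, ν {y} = ∏ m, f (restrictCols U y m) * g (restrictCols W y m))
    (P : (κ → U → 𝒳) → Prop) (Q : (κ → W → 𝒳) → Prop)
    (hQ : ∀ (σ : Equiv.Perm κ) w, Q (w ∘ σ) ↔ Q w) (fs : (S → 𝒳) → ℕ) :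
    ν ({y | P (restrictCols U y)} ∩ {y | Q (restrictCols W y)} ∩
        {y | countVec (restrictCols S y) = fs}) * ν {y | countVec (restrictCols S y) = fs} =
      ν ({y | P (restrictCols U y)} ∩ {y | countVec (restrictCols S y) = fs}) *
        ν ({y | Q (restrictCols W y)} ∩ {y | countVec (restrictCols S y) = fs}) := by
  subst hS
  have hmass (P' : (κ → U → 𝒳) → Prop) (Q' : (κ → W → 𝒳) → Prop) :
      ν ({y | P' (restrictCols U y)} ∩ {y | Q' (restrictCols W y)} ∩
        {y | countVec (restrictCols (U ∩ W) y) = fs}) = ∑ z with countVec z = fs,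
          fiberSum inter_subset_left (fun u => if P' u then ∏ m, f (u m) else 0) z *
            fiberSum inter_subset_right (fun w => if Q' w then ∏ m, g (w m) else 0) z := by
    rw [← sum_countVec_eq_sum_fiberSum_mul hUW, ← Set.ofPred_and, ← Set.ofPred_and,
      measure_setOf_eq_sum_singleton]
    simp only [hν]
  have hconst (Q' : (κ → W → 𝒳) → Prop) (hQ' : ∀ (σ : Equiv.Perm κ) w, Q' (w ∘ σ) ↔ Q' w) :
      ∀ z ∈ ({z | countVec z = fs} : Finset _), ∀ z' ∈ ({z | countVec z = fs} : Finset _),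
        fiberSum inter_subset_right (fun w => if Q' w then ∏ m, g (w m) else 0) z =
          fiberSum inter_subset_right (fun w => if Q' w then ∏ m, g (w m) else 0) z' := by
    intro z hz z' hz'
    rw [mem_filter_univ] at hz hz'
    refine fiberSum_eq_of_countVec_eq _ (fun σ w => ?_) (hz.trans hz'.symm)
    rw [hQ' σ w, Fintype.prod_equiv σ (fun m => g ((w ∘ σ) m)) (fun m => g (w m)) fun _ => rfl]
  have h₂ := hmass (fun _ => True) (fun _ => True)
  have h₃ := hmass P (fun _ => True)
  have h₄ := hmass (fun _ => True) Q
  simp only [Set.ofPred_true, Set.univ_inter, Set.inter_univ, if_true] at h₂ h₃ h₄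
  rw [hmass, h₂, h₃, h₄]
  exact sum_mul_mul_sum_mul_comm_of_const _ _ _ _ _ (hconst Q hQ)
    (by simpa using hconst (fun _ => True) fun _ _ => Iff.rfl)

end Separation

section JunctionTree

open SimpleGraph Classical

variable {ι V : Type*} {T : SimpleGraph ι} {C : ι → Finset V}

lemma inter_subset_of_forall_mem_edges (hconn : T.Connected)
    (hJT : ∀ (i j : ι) (w : T.Walk i j), w.IsPath → ∀ k ∈ w.support, C i ∩ C j ⊆ C k)
    {i j i₀ j₀ : ι} (hij : ∀ w : T.Walk i j, s(i₀, j₀) ∈ w.edges) :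
    C i ∩ C j ⊆ C i₀ ∩ C j₀ := by
  obtain ⟨w⟩ := hconn.preconnected i j
  have he := hij w.bypass
  exact subset_inter (hJT i j _ w.bypass_isPath i₀ (w.bypass.fst_mem_support_of_mem_edges he))
    (hJT i j _ w.bypass_isPath j₀ (w.bypass.snd_mem_support_of_mem_edges he))

lemma exists_prod_eq_mul_of_subset_or_subset {𝒳 R : Type*} [Fintype ι] [CommMonoid R]
    (φ : (i : ι) → (C i → 𝒳) → R) (U W : Finset V) (h : ∀ i, C i ⊆ U ∨ C i ⊆ W) :
    ∃ (f : (U → 𝒳) → R) (g : (W → 𝒳) → R), ∀ x : V → 𝒳,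
      ∏ i, φ i (fun v => x v) = f (fun v => x v) * g (fun v => x v) := by
  refine ⟨fun u => ∏ i, if hi : C i ⊆ U then φ i (fun v => u ⟨v, hi v.2⟩) else 1,
    fun w => ∏ i, if hi : C i ⊆ U then 1 else φ i (fun v => w ⟨v, (h i).resolve_left hi v.2⟩),
    fun x => ?_⟩
  rw [← prod_mul_distrib]
  refine prod_congr rfl fun i _ => ?_
  by_cases hi : C i ⊆ U <;> simp [hi]

lemma exists_split_of_forall_mem_edges [Fintype ι] [Fintype V] {𝒳 R : Type*} [CommMonoid R]
    (hconn : T.Connected)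
    (hJT : ∀ (i j : ι) (w : T.Walk i j), w.IsPath → ∀ k ∈ w.support, C i ∩ C j ⊆ C k)
    (φ : (i : ι) → (C i → 𝒳) → R) {a b i₀ j₀ : ι}
    (hsep : ∀ w : T.Walk a b, s(i₀, j₀) ∈ w.edges) :
    ∃ U W : Finset V, U ∪ W = univ ∧ U ∩ W = C i₀ ∩ C j₀ ∧ C a ⊆ U ∧ C b ⊆ W ∧
      ∃ (f : (U → 𝒳) → R) (g : (W → 𝒳) → R), ∀ x : V → 𝒳,
        ∏ i, φ i (fun v => x v) = f (fun v => x v) * g (fun v => x v) := by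
  set S := C i₀ ∩ C j₀
  set I : Finset ι := {i | (T.deleteEdges {s(i₀, j₀)}).Reachable a i}
  have hsepI : ∀ i ∈ I, ∀ j ∉ I, C i ∩ C j ⊆ S := by
    intro i hi j hj
    rw [mem_filter_univ] at hi hj
    refine inter_subset_of_forall_mem_edges hconn hJT fun w => ?_
    by_contra hw
    exact hj (hi.trans (reachable_deleteEdges_iff_exists_walk.2 ⟨w, hw⟩))
  -- Putting `S` into `U` saves showing that `i₀` or `j₀` lies on the side of `a`.
  set U := S ∪ I.biUnion C
  set W := (univ \ U) ∪ S
  have hCW : ∀ j ∉ I, C j ⊆ W := by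
    intro j hj v hv
    by_cases hvU : v ∈ U
    · refine mem_union_right _ ((mem_union.1 hvU).elim id fun hvI => ?_)
      obtain ⟨i, hi, hvi⟩ := mem_biUnion.1 hvI
      exact hsepI i hi j hj (mem_inter.2 ⟨hvi, hv⟩)
    · exact mem_union_left _ (mem_sdiff.2 ⟨mem_univ v, hvU⟩)
  have hbI : b ∉ I := by
    rw [mem_filter_univ, reachable_deleteEdges_iff_exists_walk]
    rintro ⟨w, hw⟩
    exact hw (hsep w)
  have haU : C a ⊆ U :=
    subset_union_right.trans' (subset_biUnion_of_mem C ((mem_filter_univ _).2 Reachable.rfl))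
  refine ⟨U, W, ?_, ?_, haU, hCW b hbI,
    exists_prod_eq_mul_of_subset_or_subset φ U W fun i => ?_⟩
  · ext v
    simp only [W, mem_union, mem_sdiff, mem_univ, true_and]
    tauto
  · ext v
    simp only [U, W, mem_inter, mem_union, mem_sdiff, mem_univ, true_and]
    tauto
  · by_cases hi : i ∈ I
    · exact .inl (subset_union_right.trans' (subset_biUnion_of_mem C hi))
    · exact .inr (hCW i hi)

end JunctionTree

lemma ProbabilityTheory.iIndepFun.map_fun_singleton {Ω κ β : Type*} [MeasurableSpace Ω]
    [Fintype κ] [MeasurableSpace β] {μ : Measure Ω} {X : κ → Ω → β}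
    (hX : ∀ m, Measurable (X m)) (hind : iIndepFun X μ) (y : κ → β) :
    μ.map (fun ω m => X m ω) {y} = ∏ m, μ.map (X m) {y m} := by
  have := hind.isProbabilityMeasure
  rw [hind.map_fun_eq_pi_map fun m => (hX m).aemeasurable, Measure.pi_singleton]

open Classical in
theorem cgm_counts_condIndep_general
    {Ω V 𝒳 ι : Type*} [MeasurableSpace Ω] [Fintype V] [Fintype 𝒳] [Fintype ι]
    [MeasurableSpace 𝒳] [MeasurableSingletonClass 𝒳]
    (μ : Measure Ω)
    (T : SimpleGraph ι) (hT : T.IsTree) (C : ι → Finset V)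
    -- junction tree (running intersection) property
    (hJT : ∀ (i j : ι) (w : T.Walk i j), w.IsPath → ∀ k ∈ w.support, C i ∩ C j ⊆ C k)
    -- potentials and the individual model: the pmf factors over the cliques
    (φ : (i : ι) → ((C i) → 𝒳) → ENNReal)
    {N : ℕ} (X : Fin N → Ω → V → 𝒳)
    (hXmeas : ∀ m, Measurable (X m))
    (hlaw : ∀ m (x : V → 𝒳),
      (μ.map (X m)) {x} = ∏ i, φ i (fun v => x v))
    (hindep : iIndepFun X μ)
    -- the separator edge and the separated cliques
    (a b i₀ j₀ : ι)
    (hsep : ∀ w : T.Walk a b, s(i₀, j₀) ∈ w.edges)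
    (A B : Finset V) (hA : A ⊆ C a) (hB : B ⊆ C b) :
    ∀ (fa : (A → 𝒳) → ℕ) (fb : (B → 𝒳) → ℕ)
      (fs : ((C i₀ ∩ C j₀ : Finset V) → 𝒳) → ℕ),
      μ ({ω | cgmCount X A ω = fa} ∩ {ω | cgmCount X B ω = fb}
          ∩ {ω | cgmCount X (C i₀ ∩ C j₀) ω = fs})
        * μ {ω | cgmCount X (C i₀ ∩ C j₀) ω = fs}
      = μ ({ω | cgmCount X A ω = fa} ∩ {ω | cgmCount X (C i₀ ∩ C j₀) ω = fs})
        * μ ({ω | cgmCount X B ω = fb} ∩ {ω | cgmCount X (C i₀ ∩ C j₀) ω = fs}) := by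
  intro fa fb fs
  obtain ⟨U, W, hUW, hS, haU, hbW, f, g, hfac⟩ :=
    exists_split_of_forall_mem_edges hT.connected hJT φ hsep
  have hmap (s : Set (Fin N → V → 𝒳)) :
      μ.map (fun ω m => X m ω) s = μ ((fun ω m => X m ω) ⁻¹' s) :=
    Measure.map_apply (measurable_pi_lambda _ hXmeas) (Set.toFinite s).measurableSet
  have hν (y : Fin N → V → 𝒳) : μ.map (fun ω m => X m ω) {y} =
      ∏ m, f (restrictCols U y m) * g (restrictCols W y m) := by
    rw [hindep.map_fun_singleton hXmeas]
    simp only [hlaw, hfac]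
    rfl
  have hQ (σ : Equiv.Perm (Fin N)) (w : Fin N → W → 𝒳) :
      countVec (restrictCols₂ (hB.trans hbW) (w ∘ σ)) = fb ↔
        countVec (restrictCols₂ (hB.trans hbW) w) = fb := by
    rw [restrictCols₂_comp, countVec_comp_perm]
  have key := condIndep_countVec_of_factor hUW hS _ f g hν
    (fun u => countVec (restrictCols₂ (hA.trans haU) u) = fa)
    (fun w => countVec (restrictCols₂ (hB.trans hbW) w) = fb) hQ fs
  simp only [hmap, Set.preimage_inter, Set.preimage_ofPred_eq, restrictCols₂_restrictCols] at key
  simpa only [cgmCount_eq_countVec_restrictCols] using key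

open Classical in
/-- CGM conditional independence: for i.i.d. samples from a discrete graphical model
factoring over a junction tree `T` with cliques `C i`, if every path in `T` between
the home cliques of `A` and `B` crosses the edge `{i₀, j₀}` with separator
`S = C i₀ ∩ C j₀`, then the counts `n_A` and `n_B` are conditionally independent
given `n_S` (stated via factorization of the joint pmf). -/
theorem cgm_counts_condIndep
    {Ω V 𝒳 ι : Type*} [MeasurableSpace Ω] [Fintype V] [Fintype 𝒳] [Fintype ι]
    [MeasurableSpace 𝒳] [MeasurableSingletonClass 𝒳]
    (μ : Measure Ω) [IsProbabilityMeasure μ]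
    (T : SimpleGraph ι) (hT : T.IsTree) (C : ι → Finset V)
    -- junction tree (running intersection) property
    (hJT : ∀ (i j : ι) (w : T.Walk i j), w.IsPath → ∀ k ∈ w.support, C i ∩ C j ⊆ C k)
    -- potentials and the individual model: the pmf factors over the cliques
    (φ : (i : ι) → ((C i) → 𝒳) → ENNReal)
    {N : ℕ} (hN : 0 < N) (X : Fin N → Ω → V → 𝒳)
    (hXmeas : ∀ m, Measurable (X m))
    (hlaw : ∀ m (x : V → 𝒳),
      (μ.map (X m)) {x} = ∏ i, φ i (fun v => x v))
    (hindep : iIndepFun X μ)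
    -- the separator edge and the separated cliques
    (a b i₀ j₀ : ι) (hedge : T.Adj i₀ j₀)
    (hsep : ∀ w : T.Walk a b, s(i₀, j₀) ∈ w.edges)
    (A B : Finset V) (hA : A ⊆ C a) (hB : B ⊆ C b) :
    ∀ (fa : (A → 𝒳) → ℕ) (fb : (B → 𝒳) → ℕ)
      (fs : ((C i₀ ∩ C j₀ : Finset V) → 𝒳) → ℕ),
      μ ({ω | cgmCount X A ω = fa} ∩ {ω | cgmCount X B ω = fb}
          ∩ {ω | cgmCount X (C i₀ ∩ C j₀) ω = fs})
        * μ {ω | cgmCount X (C i₀ ∩ C j₀) ω = fs}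
      = μ ({ω | cgmCount X A ω = fa} ∩ {ω | cgmCount X (C i₀ ∩ C j₀) ω = fs})
        * μ ({ω | cgmCount X B ω = fb} ∩ {ω | cgmCount X (C i₀ ∩ C j₀) ω = fs}) :=
  cgm_counts_condIndep_general μ T hT C hJT φ X hXmeas hlaw hindep a b i₀ j₀ hsep A B hA hB
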